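/- arXiv:cs/0504021 — 4 statements merged into one kernel-verified Lean document; each statement's English description precedes it below -/
import Mathlib

section
/- Given a symmetric column-stochastic nonnegative matrix W and a constant cooperation strength λ ∈ [0,1), the cooperative optimization difference equations c_i(x_i) = min over other variables of ((1-λ)Eᵢ + λ Σⱼ wᵢⱼ cⱼ(xⱼ)) have exactly one solution (c₁^∞, ..., cₙ^∞). -/
open Finset Filter

instance coopNonemptySub {n : ℕ} {D : Fin n → Type*} [∀ j, Nonempty (D j)]
    (i : Fin n) (xi : D i) : Nonempty {x : ∀ j, D j // x i = xi} :=
  ⟨⟨Function.update (fun j => Classical.arbitrary (D j)) i xi, Function.update_self i xi _⟩⟩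

/-- Minimum of `F` over all assignments whose `i`-th coordinate is fixed to `xi`. -/
noncomputable def partialMin {n : ℕ} {D : Fin n → Type*} [∀ j, Nonempty (D j)]
    (F : (∀ j, D j) → ℝ) (i : Fin n) (xi : D i) : ℝ :=
  ⨅ x : {x : ∀ j, D j // x i = xi}, F x.1

lemma iInf_dist_le {ι : Type*} [Finite ι] [Nonempty ι] (F G : ι → ℝ) (r : ℝ)
    (h : ∀ x, dist (F x) (G x) ≤ r) : dist (⨅ x, F x) (⨅ x, G x) ≤ r := by
  rw [Real.dist_eq, abs_le]
  have hbF : BddBelow (Set.range F) := Finite.bddBelow_range F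
  have hbG : BddBelow (Set.range G) := Finite.bddBelow_range G
  constructor
  · have h1 : (⨅ x, G x) ≤ ⨅ x, F x + r := by
      refine ciInf_mono hbG fun x => ?_
      have := (abs_le.1 (by simpa [Real.dist_eq] using h x)).1
      linarith
    have h2 : (⨅ x, G x) ≤ (⨅ x, F x) + r := by
      simpa [ciInf_add] using h1
    linarith
  · have h1 : (⨅ x, F x) ≤ ⨅ x, G x + r := by
      refine ciInf_mono hbF fun x => ?_
      have := (abs_le.1 (by simpa [Real.dist_eq] using h x)).2
      linarith
    have h2 : (⨅ x, F x) ≤ (⨅ x, G x) + r := by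
      simpa [ciInf_add] using h1
    linarith

theorem unique_equilibrium {n : ℕ} {D : Fin n → Type*} [∀ j, Fintype (D j)] [∀ j, Nonempty (D j)]
    (E : (∀ j, D j) → ℝ) (Ei : Fin n → (∀ j, D j) → ℝ)
    (hE : ∀ x, E x = ∑ i, Ei i x)
    (w : Fin n → Fin n → ℝ) (hw : ∀ i j, 0 ≤ w i j) (hcol : ∀ j, ∑ i, w i j = 1)
    (hsym : ∀ i j, w i j = w j i)
    (lam : ℝ) (hlam0 : 0 ≤ lam) (hlam1 : lam < 1) :
    ∃! cs : ∀ i, D i → ℝ, ∀ i (xi : D i),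
      cs i xi = partialMin (fun x => (1 - lam) * Ei i x
        + lam * ∑ j, w i j * cs j (x j)) i xi := by
  have hrow : ∀ i, ∑ j, w i j = 1 := by
    intro i
    calc ∑ j, w i j = ∑ j, w j i := by simp [hsym]
    _ = 1 := hcol i
  set T : (∀ i, D i → ℝ) → (∀ i, D i → ℝ) := fun cs i xi =>
    partialMin (fun x => (1 - lam) * Ei i x + lam * ∑ j, w i j * cs j (x j)) i xi with hT
  have hLip : LipschitzWith ⟨lam, hlam0⟩ T := by
    apply LipschitzWith.of_dist_le_mul
    intro c c'
    set d := dist c c' with hd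
    have hd0 : 0 ≤ d := dist_nonneg
    have key : ∀ i (xi : D i), dist (T c i xi) (T c' i xi) ≤ lam * d := by
      intro i xi
      apply iInf_dist_le
      intro x
      have : dist ((1 - lam) * Ei i x.1 + lam * ∑ j, w i j * c j (x.1 j))
          ((1 - lam) * Ei i x.1 + lam * ∑ j, w i j * c' j (x.1 j))
          ≤ lam * d := by
        rw [Real.dist_eq]
        have h1 : ((1 - lam) * Ei i x.1 + lam * ∑ j, w i j * c j (x.1 j))
            - ((1 - lam) * Ei i x.1 + lam * ∑ j, w i j * c' j (x.1 j))
            = lam * ∑ j, w i j * (c j (x.1 j) - c' j (x.1 j)) := by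
          have hs : ∑ j, w i j * (c j (x.1 j) - c' j (x.1 j))
              = (∑ j, w i j * c j (x.1 j)) - ∑ j, w i j * c' j (x.1 j) := by
            rw [← Finset.sum_sub_distrib]
            exact Finset.sum_congr rfl fun j _ => by ring
          rw [hs]; ring
        rw [h1, abs_mul, abs_of_nonneg hlam0]
        gcongr
        calc |∑ j, w i j * (c j (x.1 j) - c' j (x.1 j))|
            ≤ ∑ j, |w i j * (c j (x.1 j) - c' j (x.1 j))| := Finset.abs_sum_le_sum_abs _ _
          _ ≤ ∑ j, w i j * d := by
              apply Finset.sum_le_sum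
              intro j _
              rw [abs_mul, abs_of_nonneg (hw i j)]
              gcongr
              · exact hw i j
              · calc |c j (x.1 j) - c' j (x.1 j)| = dist (c j (x.1 j)) (c' j (x.1 j)) :=
                    (Real.dist_eq _ _).symm
                  _ ≤ dist (c j) (c' j) := dist_le_pi_dist (c j) (c' j) (x.1 j)
                  _ ≤ d := dist_le_pi_dist c c' j
          _ = d := by rw [← Finset.sum_mul, hrow, one_mul]
      exact this
    have : dist (T c) (T c') ≤ lam * d := by
      rw [dist_pi_le_iff (by positivity)]
      intro i
      rw [dist_pi_le_iff (by positivity)]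
      intro xi
      exact key i xi
    exact this
  have hcontr : ContractingWith ⟨lam, hlam0⟩ T := ⟨by exact_mod_cast hlam1, hLip⟩
  refine ⟨hcontr.fixedPoint T, ?_, ?_⟩
  · intro i xi
    conv_lhs => rw [← hcontr.fixedPoint_isFixedPt]
  · intro c hc
    have hfix : Function.IsFixedPt T c := by
      funext i xi
      exact (hc i xi).symm
    exact hcontr.fixedPoint_unique hfix
end

section
/- Given a symmetric column-stochastic nonnegative matrix W and constant λ ∈ [0,1), the cooperative optimization iteration, started from any initial condition c⁽⁰⁾, converges to the unique equilibrium c^∞ with exponential rate λ: ‖c⁽ᵏ⁾ − c^∞‖_∞ ≤ λᵏ ‖c⁽⁰⁾ − c^∞‖_∞ for all k ≥ 0. -/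
open Finset Filter

lemma abs_ciInf_sub_ciInf {α : Type*} [Nonempty α] [Finite α] (F G : α → ℝ) (b : ℝ)
    (h : ∀ x, |F x - G x| ≤ b) : |(⨅ x, F x) - ⨅ x, G x| ≤ b := by
  have key : ∀ (F G : α → ℝ), (∀ x, |F x - G x| ≤ b) →
      (⨅ x, F x) - ⨅ x, G x ≤ b := by
    intro F G h
    have h1 : (⨅ x, F x) - b ≤ ⨅ x, G x := by
      refine le_ciInf fun x => ?_
      have h2 := ciInf_le ((Set.finite_range F).bddBelow) x
      have h3 := (abs_le.1 (h x)).2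
      linarith
    linarith
  rw [abs_sub_le_iff]
  exact ⟨key F G h, key G F (fun x => by rw [abs_sub_comm]; exact h x)⟩

theorem exponential_convergence {n : ℕ} {D : Fin n → Type*} [∀ j, Fintype (D j)] [∀ j, Nonempty (D j)]
    (E : (∀ j, D j) → ℝ) (Ei : Fin n → (∀ j, D j) → ℝ)
    (hE : ∀ x, E x = ∑ i, Ei i x)
    (w : Fin n → Fin n → ℝ) (hw : ∀ i j, 0 ≤ w i j) (hcol : ∀ j, ∑ i, w i j = 1)
    (hsym : ∀ i j, w i j = w j i)
    (lam : ℝ) (hlam0 : 0 ≤ lam) (hlam1 : lam < 1)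
    (c : ℕ → ∀ i, D i → ℝ)
    (hrec : ∀ k i (xi : D i), c (k + 1) i xi =
      partialMin (fun x => (1 - lam) * Ei i x
        + lam * ∑ j, w i j * c k j (x j)) i xi)
    (cinf : ∀ i, D i → ℝ)
    (hfix : ∀ i (xi : D i), cinf i xi =
      partialMin (fun x => (1 - lam) * Ei i x
        + lam * ∑ j, w i j * cinf j (x j)) i xi) :
    ∀ k, (⨆ i, ⨆ xi : D i, |c k i xi - cinf i xi|) ≤
      lam ^ k * ⨆ i, ⨆ xi : D i, |c 0 i xi - cinf i xi| := by
  classical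
  set M : ℕ → ℝ := fun k => ⨆ i, ⨆ xi : D i, |c k i xi - cinf i xi| with hM
  have hMnonneg : ∀ k, 0 ≤ M k := fun k =>
    Real.iSup_nonneg fun i => Real.iSup_nonneg fun xi => abs_nonneg _
  have hbound : ∀ k (j : Fin n) (xj : D j), |c k j xj - cinf j xj| ≤ M k := by
    intro k j xj
    have h1 : |c k j xj - cinf j xj| ≤ ⨆ xi : D j, |c k j xi - cinf j xi| :=
      le_ciSup (f := fun xi : D j => |c k j xi - cinf j xi|)
        ((Set.finite_range _).bddAbove) xj
    exact h1.trans (le_ciSup ((Set.finite_range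
      (fun i => ⨆ xi : D i, |c k i xi - cinf i xi|)).bddAbove) j)
  have hrow : ∀ i, ∑ j, w i j = 1 := by
    intro i
    calc ∑ j, w i j = ∑ j, w j i := Finset.sum_congr rfl fun j _ => hsym i j
    _ = 1 := hcol i
  have hstep : ∀ k, M (k + 1) ≤ lam * M k := by
    intro k
    have key : ∀ i (xi : D i), |c (k + 1) i xi - cinf i xi| ≤ lam * M k := by
      intro i xi
      rw [hrec, hfix]
      unfold partialMin
      apply abs_ciInf_sub_ciInf
      intro x
      have heq : (1 - lam) * Ei i x.1 + lam * ∑ j, w i j * c k j (x.1 j)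
          - ((1 - lam) * Ei i x.1 + lam * ∑ j, w i j * cinf j (x.1 j))
          = lam * ∑ j, w i j * (c k j (x.1 j) - cinf j (x.1 j)) := by
        calc (1 - lam) * Ei i x.1 + lam * ∑ j, w i j * c k j (x.1 j)
            - ((1 - lam) * Ei i x.1 + lam * ∑ j, w i j * cinf j (x.1 j))
            = lam * ((∑ j, w i j * c k j (x.1 j)) - ∑ j, w i j * cinf j (x.1 j)) := by ring
          _ = lam * ∑ j, (w i j * c k j (x.1 j) - w i j * cinf j (x.1 j)) := by
              rw [Finset.sum_sub_distrib]
          _ = lam * ∑ j, w i j * (c k j (x.1 j) - cinf j (x.1 j)) := by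
              simp_rw [mul_sub]
      rw [heq, abs_mul, abs_of_nonneg hlam0]
      refine mul_le_mul_of_nonneg_left ?_ hlam0
      calc |∑ j, w i j * (c k j (x.1 j) - cinf j (x.1 j))|
          ≤ ∑ j, |w i j * (c k j (x.1 j) - cinf j (x.1 j))| :=
            Finset.abs_sum_le_sum_abs _ _
        _ ≤ ∑ j, w i j * M k := by
            refine Finset.sum_le_sum fun j _ => ?_
            rw [abs_mul, abs_of_nonneg (hw i j)]
            exact mul_le_mul_of_nonneg_left (hbound k j (x.1 j)) (hw i j)
        _ = M k := by rw [← Finset.sum_mul, hrow i, one_mul]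
    refine Real.iSup_le (fun i => Real.iSup_le (fun xi => key i xi) ?_) ?_ <;>
      exact mul_nonneg hlam0 (hMnonneg k)
  intro k
  induction k with
  | zero => simp [hM]
  | succ k ih =>
      calc M (k + 1) ≤ lam * M k := hstep k
        _ ≤ lam * (lam ^ k * M 0) := mul_le_mul_of_nonneg_left ih hlam0
        _ = lam ^ (k + 1) * M 0 := by ring
end

section
/- With constant λ ∈ [0,1), column-stochastic nonnegative W, and c⁽⁰⁾ = 0, the sequence E⁽ᵏ⁾₋* of lower bounds converges (being non-decreasing and bounded above by E*), and its limit equals Σᵢ minₓᵢ cᵢ^∞(xᵢ) where c^∞ is the unique equilibrium (assuming W is also symmetric). -/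
open Finset Filter

lemma coop_iInf_attained {ι : Type*} [Finite ι] [Nonempty ι] (f : ι → ℝ) :
    ∃ a, (⨅ b, f b) = f a ∧ ∀ b, f a ≤ f b := by
  obtain ⟨a, ha⟩ := Finite.exists_min f
  refine ⟨a, le_antisymm (ciInf_le ((Set.finite_range f).bddBelow) a) (le_ciInf ha), ha⟩

lemma coop_abs_iInf_sub_iInf {ι : Type*} [Finite ι] [Nonempty ι] (f g : ι → ℝ) (ε : ℝ)
    (h : ∀ x, |f x - g x| ≤ ε) : |(⨅ x, f x) - ⨅ x, g x| ≤ ε := by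
  obtain ⟨a, ha, ha'⟩ := coop_iInf_attained f
  obtain ⟨b, hb, hb'⟩ := coop_iInf_attained g
  have h1 := h a
  have h2 := h b
  rw [abs_le] at h1 h2 ⊢
  constructor
  · have := hb' a
    linarith [ha, hb]
  · have := ha' b
    linarith [ha, hb]

theorem lower_bounds_converge_to_equilibrium_value {n : ℕ} {D : Fin n → Type*} [∀ j, Fintype (D j)] [∀ j, Nonempty (D j)]
    (E : (∀ j, D j) → ℝ) (Ei : Fin n → (∀ j, D j) → ℝ)
    (hE : ∀ x, E x = ∑ i, Ei i x)
    (w : Fin n → Fin n → ℝ) (hw : ∀ i j, 0 ≤ w i j) (hcol : ∀ j, ∑ i, w i j = 1)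
    (hsym : ∀ i j, w i j = w j i)
    (lam : ℝ) (hlam0 : 0 ≤ lam) (hlam1 : lam < 1)
    (c : ℕ → ∀ i, D i → ℝ) (hc0 : ∀ i (xi : D i), c 0 i xi = 0)
    (hrec : ∀ k i (xi : D i), c (k + 1) i xi =
      partialMin (fun x => (1 - lam) * Ei i x
        + lam * ∑ j, w i j * c k j (x j)) i xi)
    (cinf : ∀ i, D i → ℝ)
    (hfix : ∀ i (xi : D i), cinf i xi =
      partialMin (fun x => (1 - lam) * Ei i x
        + lam * ∑ j, w i j * cinf j (x j)) i xi) :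
    Filter.Tendsto (fun k => ∑ i, ⨅ xi : D i, c k i xi) Filter.atTop
      (nhds (∑ i, ⨅ xi : D i, cinf i xi)) := by
  -- bound on |cinf|
  set B : ℝ := ∑ i, ∑ xi : D i, |cinf i xi| with hBdef
  have hB : ∀ i (xi : D i), |cinf i xi| ≤ B := by
    intro i xi
    have h1 : |cinf i xi| ≤ ∑ y : D i, |cinf i y| :=
      Finset.single_le_sum (f := fun y : D i => |cinf i y|)
        (fun y _ => abs_nonneg _) (Finset.mem_univ xi)
    refine h1.trans ?_
    exact Finset.single_le_sum (f := fun j => ∑ y : D j, |cinf j y|)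
      (fun j _ => Finset.sum_nonneg fun y _ => abs_nonneg _) (Finset.mem_univ i)
  have hB0 : 0 ≤ B :=
    Finset.sum_nonneg fun i _ => Finset.sum_nonneg fun y _ => abs_nonneg _
  have hrow : ∀ i, ∑ j, w i j = 1 := by
    intro i
    calc ∑ j, w i j = ∑ j, w j i := by simp_rw [hsym]
    _ = 1 := hcol i
  -- key contraction estimate
  have key : ∀ k i (xi : D i), |c k i xi - cinf i xi| ≤ lam ^ k * B := by
    intro k
    induction k with
    | zero =>
      intro i xi
      simpa [hc0] using hB i xi
    | succ k ih =>
      intro i xi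
      rw [hrec, hfix]
      unfold partialMin
      refine coop_abs_iInf_sub_iInf _ _ _ ?_
      intro x
      have hx : ((1 - lam) * Ei i x.1 + lam * ∑ j, w i j * c k j (x.1 j))
          - ((1 - lam) * Ei i x.1 + lam * ∑ j, w i j * cinf j (x.1 j))
          = lam * ∑ j, w i j * (c k j (x.1 j) - cinf j (x.1 j)) := by
        rw [add_sub_add_left_eq_sub, ← mul_sub, ← Finset.sum_sub_distrib]
        congr 1
        exact Finset.sum_congr rfl fun j _ => (mul_sub _ _ _).symm
      rw [hx, abs_mul, abs_of_nonneg hlam0]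
      have h2 : |∑ j, w i j * (c k j (x.1 j) - cinf j (x.1 j))| ≤ lam ^ k * B := by
        calc |∑ j, w i j * (c k j (x.1 j) - cinf j (x.1 j))|
            ≤ ∑ j, |w i j * (c k j (x.1 j) - cinf j (x.1 j))| :=
              Finset.abs_sum_le_sum_abs _ _
        _ ≤ ∑ j, w i j * (lam ^ k * B) := by
              apply Finset.sum_le_sum
              intro j _
              rw [abs_mul, abs_of_nonneg (hw i j)]
              exact mul_le_mul_of_nonneg_left (ih j (x.1 j)) (hw i j)
        _ = (∑ j, w i j) * (lam ^ k * B) := by rw [← Finset.sum_mul]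
        _ = lam ^ k * B := by rw [hrow i, one_mul]
      calc lam * |∑ j, w i j * (c k j (x.1 j) - cinf j (x.1 j))|
          ≤ lam * (lam ^ k * B) := mul_le_mul_of_nonneg_left h2 hlam0
      _ = lam ^ (k + 1) * B := by ring
  -- transfer to infima and sums
  have hinf : ∀ k (i : Fin n),
      |(⨅ xi : D i, c k i xi) - ⨅ xi : D i, cinf i xi| ≤ lam ^ k * B := by
    intro k i
    exact coop_abs_iInf_sub_iInf _ _ _ (fun xi => key k i xi)
  rw [tendsto_iff_norm_sub_tendsto_zero]
  have hbound : ∀ k, ‖(∑ i, ⨅ xi : D i, c k i xi) - ∑ i, ⨅ xi : D i, cinf i xi‖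
      ≤ (n : ℝ) * (lam ^ k * B) := by
    intro k
    rw [Real.norm_eq_abs, ← Finset.sum_sub_distrib]
    calc |∑ i, ((⨅ xi : D i, c k i xi) - ⨅ xi : D i, cinf i xi)|
        ≤ ∑ i, |(⨅ xi : D i, c k i xi) - ⨅ xi : D i, cinf i xi| :=
          Finset.abs_sum_le_sum_abs _ _
    _ ≤ ∑ _i : Fin n, lam ^ k * B := Finset.sum_le_sum fun i _ => hinf k i
    _ = (n : ℝ) * (lam ^ k * B) := by simp [Finset.sum_const, nsmul_eq_mul]
  have hlim : Tendsto (fun k => (n : ℝ) * (lam ^ k * B)) atTop (nhds 0) := by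
    have h1 : Tendsto (fun k => lam ^ k) atTop (nhds 0) :=
      tendsto_pow_atTop_nhds_zero_of_lt_one hlam0 hlam1
    have := (h1.mul_const B).const_mul (n : ℝ)
    simpa using this
  exact squeeze_zero_norm (fun k => by simpa using hbound k) hlim
end

section
/- For any symmetric doubly stochastic matrix W, constant λ ∈ [0,1), and two initial conditions c⁽⁰⁾ and d⁽⁰⁾, the corresponding cooperative optimization trajectories satisfy ‖c⁽ᵏ⁾ − d⁽ᵏ⁾‖_∞ ≤ λᵏ ‖c⁽⁰⁾ − d⁽⁰⁾‖_∞; hence the algorithm's asymptotic behavior is independent of the initial condition. -/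
open Finset Filter

private lemma abs_ciInf_sub_ciInf_s18 {ι : Type*} [Nonempty ι] [Finite ι] (f g : ι → ℝ) (B : ℝ)
    (h : ∀ x, |f x - g x| ≤ B) : |(⨅ x, f x) - ⨅ x, g x| ≤ B := by
  have h1 : (⨅ x, f x) - B ≤ ⨅ x, g x :=
    le_ciInf fun x => by
      linarith [ciInf_le (Finite.bddBelow_range f) x, (abs_sub_le_iff.mp (h x)).1]
  have h2 : (⨅ x, g x) - B ≤ ⨅ x, f x :=
    le_ciInf fun x => by
      linarith [ciInf_le (Finite.bddBelow_range g) x, (abs_sub_le_iff.mp (h x)).2]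
  rw [abs_sub_le_iff]
  constructor <;> linarith

theorem trajectories_contract {n : ℕ} {D : Fin n → Type*} [∀ j, Fintype (D j)] [∀ j, Nonempty (D j)]
    (E : (∀ j, D j) → ℝ) (Ei : Fin n → (∀ j, D j) → ℝ)
    (hE : ∀ x, E x = ∑ i, Ei i x)
    (w : Fin n → Fin n → ℝ) (hw : ∀ i j, 0 ≤ w i j) (hcol : ∀ j, ∑ i, w i j = 1)
    (hsym : ∀ i j, w i j = w j i) (hrow : ∀ i, ∑ j, w i j = 1)
    (lam : ℝ) (hlam0 : 0 ≤ lam) (hlam1 : lam < 1)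
    (c d : ℕ → ∀ i, D i → ℝ)
    (hrecc : ∀ k i (xi : D i), c (k + 1) i xi =
      partialMin (fun x => (1 - lam) * Ei i x
        + lam * ∑ j, w i j * c k j (x j)) i xi)
    (hrecd : ∀ k i (xi : D i), d (k + 1) i xi =
      partialMin (fun x => (1 - lam) * Ei i x
        + lam * ∑ j, w i j * d k j (x j)) i xi) :
    ∀ k, (⨆ i, ⨆ xi : D i, |c k i xi - d k i xi|) ≤
      lam ^ k * ⨆ i, ⨆ xi : D i, |c 0 i xi - d 0 i xi| := by
  set S : ℕ → ℝ := fun k => ⨆ i, ⨆ xi : D i, |c k i xi - d k i xi| with hS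
  have hSnn : ∀ k, 0 ≤ S k := fun k =>
    Real.iSup_nonneg fun i => Real.iSup_nonneg fun xi => abs_nonneg _
  have hle : ∀ k i (xi : D i), |c k i xi - d k i xi| ≤ S k := by
    intro k i xi
    have h1 : |c k i xi - d k i xi| ≤ ⨆ y : D i, |c k i y - d k i y| :=
      le_ciSup (Finite.bddAbove_range fun y : D i => |c k i y - d k i y|) xi
    have h2 : (⨆ y : D i, |c k i y - d k i y|) ≤ S k :=
      le_ciSup (Finite.bddAbove_range fun j => ⨆ y : D j, |c k j y - d k j y|) i
    exact le_trans h1 h2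
  have hstep : ∀ k, S (k + 1) ≤ lam * S k := by
    intro k
    apply Real.iSup_le _ (mul_nonneg hlam0 (hSnn k))
    intro i
    apply Real.iSup_le _ (mul_nonneg hlam0 (hSnn k))
    intro xi
    rw [hrecc, hrecd]
    unfold partialMin
    apply abs_ciInf_sub_ciInf_s18
    intro x
    have heq : ((1 - lam) * Ei i x.1 + lam * ∑ j, w i j * c k j (x.1 j)) -
        ((1 - lam) * Ei i x.1 + lam * ∑ j, w i j * d k j (x.1 j))
        = lam * ∑ j, w i j * (c k j (x.1 j) - d k j (x.1 j)) := by
      simp only [mul_sub, Finset.sum_sub_distrib]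
      ring
    rw [heq, abs_mul, abs_of_nonneg hlam0]
    refine mul_le_mul_of_nonneg_left ?_ hlam0
    calc |∑ j, w i j * (c k j (x.1 j) - d k j (x.1 j))|
        ≤ ∑ j, |w i j * (c k j (x.1 j) - d k j (x.1 j))| := Finset.abs_sum_le_sum_abs _ _
      _ ≤ ∑ j, w i j * S k := by
          refine Finset.sum_le_sum fun j _ => ?_
          rw [abs_mul, abs_of_nonneg (hw i j)]
          exact mul_le_mul_of_nonneg_left (hle k j (x.1 j)) (hw i j)
      _ = S k := by rw [← Finset.sum_mul, hrow i, one_mul]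
  intro k
  induction k with
  | zero => simp
  | succ k ih =>
    calc S (k + 1) ≤ lam * S k := hstep k
      _ ≤ lam * (lam ^ k * S 0) := mul_le_mul_of_nonneg_left ih hlam0
      _ = lam ^ (k + 1) * S 0 := by ring
end
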